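/- Fix δ ∈ (0,1), γ ≥ 5, λ > e³/δ and C₁ > 0. There exists a constant C₃ > 0, depending only on δ, γ, λ, C₁, with the following property: for every m ≥ 1, every β ∈ ℝ^m, every k ∈ ℤ, r > 1, a > 0 such that (r, a, δ^k) is admissible, every n_Q ∈ ℝ^m and every Q ⊆ B(n_Q, C₁δ^k) (Euclidean ball), one has P_{r,Q}(a) ⊆ { x ∈ G : d_Z(x, (n_Q + (a−1)β, a)) < C₃ log r }. -/

import Mathlib

/-- The inverse hyperbolic cosine. -/
noncomputable def arcosh (x : ℝ) : ℝ := Real.log (x + Real.sqrt (x ^ 2 - 1))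

/-- The Carnot–Carathéodory distance on `G = ℝ^m × (0,∞)`. -/
noncomputable def dG {m : ℕ} (x y : EuclideanSpace ℝ (Fin m) × ℝ) : ℝ :=
  arcosh (Real.cosh (Real.log (x.2 / y.2)) + ‖x.1 - y.1‖ ^ 2 / (2 * x.2 * y.2))

/-- The flow distance `d_Z` associated with `β ∈ ℝ^m`. -/
noncomputable def dZ {m : ℕ} (β : EuclideanSpace ℝ (Fin m))
    (x y : EuclideanSpace ℝ (Fin m) × ℝ) : ℝ :=
  dG (x.1 - (x.2 - 1) • β, x.2) (y.1 - (y.2 - 1) • β, y.2)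

/-- The cylinder `P_{r,E}(a) = { (n + (e^t − 1)β, e^t) : n ∈ E, t ∈ U_r(a) }`, where
`U_r(a) = (log(a/r), log(ar))`. -/
def cylinder {m : ℕ} (β : EuclideanSpace ℝ (Fin m)) (r a : ℝ)
    (E : Set (EuclideanSpace ℝ (Fin m))) : Set (EuclideanSpace ℝ (Fin m) × ℝ) :=
  {x | ∃ n ∈ E, ∃ t ∈ Set.Ioo (Real.log (a / r)) (Real.log (a * r)),
    x = (n + (Real.exp t - 1) • β, Real.exp t)}

/-- Admissibility of a triple `(r, a, d)` relative to parameters `δ ∈ (0,1)`, `γ ≥ 5`,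
`λ > e³/δ`: either (large case) `r > e` and `a r² ≤ d ≤ λ a r^γ`, or (small case)
`1 < r ≤ e` and `a e² log r ≤ d ≤ λ a e² log r`. -/
def Admissible (γ lam r a d : ℝ) : Prop :=
  (Real.exp 1 < r ∧ a * r ^ (2 : ℕ) ≤ d ∧ d ≤ lam * a * r ^ γ) ∨
  (1 < r ∧ r ≤ Real.exp 1 ∧ a * Real.exp 2 * Real.log r ≤ d ∧
    d ≤ lam * a * Real.exp 2 * Real.log r)

/-!
Moving a point of the cylinder and the centre back along the flow of `Z` turns `d_Z` into `d_G`
between `(n, e^t)` and `(n_Q, a)`, i.e. `arcosh (cosh (t - log a) + |n - n_Q|² / (2 e^t a))`.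
Since `|t - log a| < log r` and `e^t > a / r`, this argument is below
`cosh (log r) + (C₁ δ^k / a)² r / 2`, and admissibility bounds `δ^k / a` by `λ r^γ` when `r > e`
and by `λ e² log r` when `r ≤ e`. In the first case the argument is `O(r^(2γ+1))`, whose `arcosh`
is `O(log r)` because `log r > 1`; in the second it is `cosh (log r) + O((log r)²)`, which is at
most `cosh (C log r)` for large `C`.
-/

open Real hiding arcosh

lemma arcosh_eq_real_arcosh : arcosh = Real.arcosh := rfl

lemma arcosh_lt_of_lt_cosh {x y : ℝ} (hx : 0 < x) (hy : 0 ≤ y) (h : x < cosh y) :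
    arcosh x < y := by
  rw [arcosh_eq_real_arcosh, ← Real.arcosh_cosh hy]
  exact (Real.arcosh_lt_arcosh hx (cosh_pos y)).2 h

lemma mul_exp_le_cosh_mul {K b c L : ℝ} (hK : 1 ≤ 2 * K) (hL : 1 ≤ L)
    (hc : log (2 * K) + b ≤ c) : K * exp (b * L) ≤ cosh (c * L) := by
  have hlog : log (2 * K) ≤ log (2 * K) * L := le_mul_of_one_le_right (log_nonneg hK) hL
  calc K * exp (b * L) = exp (log (2 * K) + b * L) / 2 := by
        rw [exp_add, exp_log (by linarith)]; ring
    _ ≤ exp (c * L) / 2 := by gcongr; nlinarith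
    _ ≤ cosh (c * L) := by rw [cosh_eq]; linarith [exp_pos (-(c * L))]

lemma cosh_add_mul_sq_le_cosh_mul {K c L : ℝ} (hK : 0 ≤ K) (hc : √(1 + 2 * K) ≤ c)
    (hL : 0 ≤ L) : cosh L + K * L ^ 2 ≤ cosh (c * L) := by
  obtain ⟨hc₀, hc₂⟩ := sqrt_le_iff.1 hc
  have hc₁ : 1 ≤ c := by nlinarith
  set u := (c + 1) * L / 2
  set v := (c - 1) * L / 2
  have h_diff : cosh (c * L) - cosh L = 2 * sinh u * sinh v := by
    rw [show c * L = u + v by ring, show L = u - v by ring, cosh_add, cosh_sub]; ring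
  have hu₀ : 0 ≤ u := by positivity
  have hv₀ : 0 ≤ v := by simp only [v]; nlinarith
  have h_prod : u * v ≤ sinh u * sinh v :=
    mul_le_mul (self_le_sinh_iff.2 hu₀) (self_le_sinh_iff.2 hv₀) hv₀
      (hu₀.trans (self_le_sinh_iff.2 hu₀))
  have huv : u * v = (c ^ 2 - 1) * L ^ 2 / 4 := by simp only [u, v]; ring
  nlinarith [mul_le_mul_of_nonneg_right hc₂ (sq_nonneg L)]

section Flow

variable {m : ℕ} (β : EuclideanSpace ℝ (Fin m))

lemma dZ_add_smul (n n' : EuclideanSpace ℝ (Fin m)) (b b' : ℝ) :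
    dZ β (n + (b - 1) • β, b) (n' + (b' - 1) • β, b') = dG (n, b) (n', b') := by
  simp only [dZ, add_sub_cancel_right]

lemma dG_exp_left (n n' : EuclideanSpace ℝ (Fin m)) (t : ℝ) {a : ℝ} (ha : 0 < a) :
    dG (n, exp t) (n', a) = arcosh (cosh (t - log a) + ‖n - n'‖ ^ 2 / (2 * exp t * a)) := by
  rw [dG, log_div (exp_ne_zero t) ha.ne', log_exp]

lemma cylinder_mono (r a : ℝ) {E F : Set (EuclideanSpace ℝ (Fin m))} (h : E ⊆ F) :
    cylinder β r a E ⊆ cylinder β r a F := by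
  rintro _ ⟨n, hn, t, ht, rfl⟩
  exact ⟨n, h hn, t, ht, rfl⟩

lemma cylinder_ball_subset_dZ_ball (nQ : EuclideanSpace ℝ (Fin m)) {r a ρ R : ℝ}
    (hr : 1 < r) (ha : 0 < a) (hR : 0 ≤ R)
    (hρ : cosh (log r) + ρ ^ 2 * r / (2 * a ^ 2) ≤ cosh R) :
    cylinder β r a (Metric.ball nQ ρ) ⊆ {x | dZ β x (nQ + (a - 1) • β, a) < R} := by
  rintro _ ⟨n, hn, t, ⟨ht₁, ht₂⟩, rfl⟩
  have hr₀ : 0 < r := one_pos.trans hr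
  rw [log_div ha.ne' hr₀.ne'] at ht₁
  rw [log_mul ha.ne' hr₀.ne'] at ht₂
  have h_vert : cosh (t - log a) < cosh (log r) := by
    rw [cosh_lt_cosh, abs_of_pos (log_pos hr), abs_lt]
    constructor <;> linarith
  have h_horiz : ‖n - nQ‖ ^ 2 / (2 * exp t * a) ≤ ρ ^ 2 * r / (2 * a ^ 2) := by
    have h_height : a < r * exp t := by
      rw [← exp_log ha, ← exp_log hr₀, ← exp_add]
      exact exp_lt_exp.2 (by linarith)
    have h_dist : ‖n - nQ‖ ^ 2 ≤ ρ ^ 2 := by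
      rw [Metric.mem_ball, dist_eq_norm] at hn
      exact pow_le_pow_left₀ (norm_nonneg _) hn.le 2
    rw [div_le_div_iff₀ (by positivity) (by positivity)]
    nlinarith [mul_le_mul h_dist h_height.le ha.le (sq_nonneg ρ)]
  simp only [Set.mem_ofPred_eq, dZ_add_smul, dG_exp_left _ _ _ ha]
  exact arcosh_lt_of_lt_cosh (by positivity) hR (by linarith)

end Flow

lemma cosh_add_le_cosh_mul_of_large {C₁ lam γ L a d c : ℝ} (hγ : 0 ≤ γ) (hL : 1 ≤ L)
    (ha : 0 < a) (hd : 0 < d) (hd_le : d ≤ lam * a * exp L ^ γ)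
    (hc : log (2 * (1 + C₁ ^ 2 * lam ^ 2 / 2)) + (2 * γ + 1) ≤ c) :
    cosh L + (C₁ * d) ^ 2 * exp L / (2 * a ^ 2) ≤ cosh (c * L) := by
  rw [← exp_mul] at hd_le
  have h_exp : exp ((2 * γ + 1) * L) = exp (L * γ) ^ 2 * exp L := by
    rw [sq, ← exp_add, ← exp_add]; ring_nf
  have h_vert : cosh L ≤ exp ((2 * γ + 1) * L) := by
    rw [cosh_eq]
    have h_neg : exp (-L) ≤ exp ((2 * γ + 1) * L) := exp_le_exp.2 (by nlinarith)
    linarith [exp_le_exp.2 (show L ≤ (2 * γ + 1) * L by nlinarith)]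
  have h_horiz : (C₁ * d) ^ 2 * exp L / (2 * a ^ 2)
      ≤ C₁ ^ 2 * lam ^ 2 / 2 * exp ((2 * γ + 1) * L) := by
    have hd_sq : d ^ 2 ≤ (lam * a * exp (L * γ)) ^ 2 := pow_le_pow_left₀ hd.le hd_le 2
    rw [div_le_iff₀ (by positivity), h_exp]
    nlinarith [mul_le_mul_of_nonneg_left hd_sq (by positivity : 0 ≤ C₁ ^ 2 * exp L)]
  calc cosh L + (C₁ * d) ^ 2 * exp L / (2 * a ^ 2)
      ≤ (1 + C₁ ^ 2 * lam ^ 2 / 2) * exp ((2 * γ + 1) * L) := by linarith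
    _ ≤ cosh (c * L) := mul_exp_le_cosh_mul (by nlinarith [sq_nonneg (C₁ * lam)]) hL hc

lemma cosh_add_le_cosh_mul_of_small {C₁ lam L a d c : ℝ} (hL₀ : 0 < L) (hL₁ : L ≤ 1)
    (ha : 0 < a) (hd : 0 < d) (hd_le : d ≤ lam * a * exp 2 * L)
    (hc : √(1 + 2 * (C₁ ^ 2 * lam ^ 2 * exp 5 / 2)) ≤ c) :
    cosh L + (C₁ * d) ^ 2 * exp L / (2 * a ^ 2) ≤ cosh (c * L) := by
  have h_horiz : (C₁ * d) ^ 2 * exp L / (2 * a ^ 2) ≤ C₁ ^ 2 * lam ^ 2 * exp 5 / 2 * L ^ 2 := by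
    have hd_sq : d ^ 2 ≤ (lam * a * exp 2 * L) ^ 2 := pow_le_pow_left₀ hd.le hd_le 2
    have h_exp : exp L ≤ exp 1 := exp_le_exp.2 hL₁
    have h_exp5 : exp 5 = exp 2 ^ 2 * exp 1 := by rw [sq, ← exp_add, ← exp_add]; norm_num
    rw [div_le_iff₀ (by positivity), h_exp5]
    nlinarith [mul_le_mul hd_sq h_exp (exp_pos L).le (sq_nonneg _),
      mul_nonneg (sq_nonneg C₁) (sq_nonneg (lam * a * exp 2 * L))]
  linarith [cosh_add_mul_sq_le_cosh_mul (by positivity) hc hL₀.le]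

theorem cylinder_subset_ball_general (δ γ lam C₁ : ℝ) (hγ : 5 ≤ γ) :
    ∃ C₃ : ℝ, 0 < C₃ ∧
      ∀ (m : ℕ), 1 ≤ m → ∀ (β : EuclideanSpace ℝ (Fin m)) (k : ℤ) (r a : ℝ),
        1 < r → 0 < a → Admissible γ lam r a (δ ^ k) →
        ∀ (nQ : EuclideanSpace ℝ (Fin m)) (Q : Set (EuclideanSpace ℝ (Fin m))),
          Q ⊆ Metric.ball nQ (C₁ * δ ^ k) →
          cylinder β r a Q ⊆
            {x | dZ β x (nQ + (a - 1) • β, a) < C₃ * Real.log r} := by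
  set C₃ := max (log (2 * (1 + C₁ ^ 2 * lam ^ 2 / 2)) + (2 * γ + 1))
    √(1 + 2 * (C₁ ^ 2 * lam ^ 2 * exp 5 / 2))
  have hC₃ : 0 < C₃ := lt_max_of_lt_right (sqrt_pos.2 (by positivity))
  refine ⟨C₃, hC₃, fun m _ β k r a hr ha hadm nQ Q hQ => ?_⟩
  obtain ⟨L, rfl⟩ : ∃ L, r = exp L := ⟨log r, (exp_log (by linarith)).symm⟩
  have hL : 0 < L := one_lt_exp_iff.1 hr
  refine (cylinder_mono β _ a hQ).trans (cylinder_ball_subset_dZ_ball β nQ hr ha ?_ ?_)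
  · rw [log_exp]; positivity
  rw [Admissible, log_exp] at hadm
  rw [log_exp]
  rcases hadm with ⟨hr_large, hd₀, hd⟩ | ⟨-, hr_small, hd₀, hd⟩
  · exact cosh_add_le_cosh_mul_of_large (by linarith) (exp_lt_exp.1 hr_large).le ha
      (lt_of_lt_of_le (by positivity) hd₀) hd (le_max_left _ _)
  · exact cosh_add_le_cosh_mul_of_small hL (exp_le_exp.1 hr_small) ha
      (lt_of_lt_of_le (by positivity) hd₀) hd (le_max_right _ _)

/-- there is a constant `C₃ > 0`, depending only on `δ, γ, λ, C₁`, such that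
every admissible cylinder `P_{r,Q}(a)` with base `Q ⊆ B(n_Q, C₁ δ^k)` is contained in the
`d_Z`-ball of center `(n_Q + (a−1)β, a)` and radius `C₃ log r`. -/
theorem cylinder_subset_ball (δ γ lam C₁ : ℝ) (hδ₀ : 0 < δ) (hδ₁ : δ < 1) (hγ : 5 ≤ γ)
    (hlam : Real.exp 3 / δ < lam) (hC₁ : 0 < C₁) :
    ∃ C₃ : ℝ, 0 < C₃ ∧
      ∀ (m : ℕ), 1 ≤ m → ∀ (β : EuclideanSpace ℝ (Fin m)) (k : ℤ) (r a : ℝ),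
        1 < r → 0 < a → Admissible γ lam r a (δ ^ k) →
        ∀ (nQ : EuclideanSpace ℝ (Fin m)) (Q : Set (EuclideanSpace ℝ (Fin m))),
          Q ⊆ Metric.ball nQ (C₁ * δ ^ k) →
          cylinder β r a Q ⊆
            {x | dZ β x (nQ + (a - 1) • β, a) < C₃ * Real.log r} :=
  cylinder_subset_ball_general δ γ lam C₁ hγ
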